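/- arXiv:1106.0870 — 2 statements merged into one kernel-verified Lean document; each statement's English description precedes it below -/
import Mathlib

section
/- Let S₁, S₂ ∈ ℝ^{d×d} with S₂ = u vᵀ of rank 1. Suppose |vᵀ S₁^ℓ u| ≤ γ^{ℓ+1} for all ℓ ≥ 0, where 0 < γ < 1. Then for every word w = (S₁^{ℓ₁} S₂)(S₁^{ℓ₂} S₂)⋯(S₁^{ℓ_n} S₂) with ℓ_k ≥ 0, the spectral radius of the product is at most γ^{n + ℓ₁ + ⋯ + ℓ_n}. -/
open Matrix

/-!
Each factor `S₁ ^ ℓ * S₂ = (S₁ ^ ℓ u) vᵀ` has rank one with the common row vector `v`, so the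
word collapses to the scalar `∏_{k ≥ 2} vᵀ S₁ ^ ℓₖ u` times the rank-one matrix `(S₁ ^ ℓ₁ u) vᵀ`.
A rank-one matrix `x yᵀ` has characteristic polynomial `X ^ (d - 1) (X - yᵀ x)`, so its spectral
radius is at most `|yᵀ x|`. Hence the spectral radius of the word is at most
`∏ₖ |vᵀ S₁ ^ ℓₖ u| ≤ ∏ₖ γ ^ (ℓₖ + 1)`.
-/

/-- The spectral radius of a real square matrix: the maximum of the moduli of its
complex eigenvalues. -/
noncomputable def specRad {d : ℕ} (A : Matrix (Fin d) (Fin d) ℝ) : ENNReal :=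
  spectralRadius ℂ (A.map (Complex.ofReal))

namespace Matrix

section Spectrum

variable {n : Type*} [Fintype n] [DecidableEq n]

theorem spectrum_vecMulVec_subset {K : Type*} [Field K] (x y : n → K) :
    spectrum K (vecMulVec x y) ⊆ {0, x ⬝ᵥ y} := by
  intro μ hμ
  rw [mem_spectrum_iff_isRoot_charpoly, charpoly_vecMulVec] at hμ
  cases isEmpty_or_nonempty n
  · simp at hμ
  obtain ⟨k, hk⟩ : ∃ k, Fintype.card n = k + 1 :=
    ⟨_, (Nat.succ_pred_eq_of_pos Fintype.card_pos).symm⟩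
  have hroot : μ ^ k * (μ - x ⬝ᵥ y) = 0 := by
    simpa [hk, pow_succ, mul_sub, mul_comm] using hμ
  rcases mul_eq_zero.mp hroot with h | h
  · exact .inl (eq_zero_of_pow_eq_zero h)
  · exact .inr (sub_eq_zero.mp h)

variable {𝕜 : Type*} [NormedField 𝕜]

theorem spectralRadius_vecMulVec_le (x y : n → 𝕜) :
    spectralRadius 𝕜 (vecMulVec x y) ≤ ‖x ⬝ᵥ y‖₊ := by
  refine iSup₂_le fun μ hμ => ?_
  rcases spectrum_vecMulVec_subset x y hμ with rfl | rfl <;> simp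

theorem spectralRadius_one_le : spectralRadius 𝕜 (1 : Matrix n n 𝕜) ≤ 1 := by
  refine iSup₂_le fun μ hμ => ?_
  rw [← diagonal_one, spectrum_diagonal] at hμ
  obtain ⟨_, rfl⟩ := hμ
  simp

end Spectrum

theorem list_prod_ofFn_vecMulVec {m R : Type*} [Fintype m] [DecidableEq m] [CommSemiring R]
    {n : ℕ} (x : Fin (n + 1) → m → R) (y : m → R) :
    (List.ofFn fun k => vecMulVec (x k) y).prod =
      vecMulVec (x 0) ((∏ k : Fin n, y ⬝ᵥ x k.succ) • y) := by
  induction n with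
  | zero => simp
  | succ n ih =>
    rw [List.ofFn_succ, List.prod_cons, ih (fun k => x k.succ), vecMulVec_mul_vecMulVec,
      smul_smul, Fin.prod_univ_succ (fun k => y ⬝ᵥ x k.succ)]

end Matrix

theorem specRad_vecMulVec_le {d : ℕ} (x y : Fin d → ℝ) :
    specRad (vecMulVec x y) ≤ ENNReal.ofReal |x ⬝ᵥ y| := by
  have hmap : (vecMulVec x y).map Complex.ofReal =
      vecMulVec (Complex.ofReal ∘ x) (Complex.ofReal ∘ y) := by
    ext
    simp [vecMulVec_apply]
  have hdot : (Complex.ofReal ∘ x) ⬝ᵥ (Complex.ofReal ∘ y) = ((x ⬝ᵥ y : ℝ) : ℂ) :=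
    (RingHom.map_dotProduct Complex.ofRealHom x y).symm
  rw [specRad, hmap]
  refine (spectralRadius_vecMulVec_le _ _).trans_eq ?_
  rw [hdot, Complex.nnnorm_real, ← Real.enorm_eq_ofReal_abs]
  rfl

theorem specRad_one_le {d : ℕ} : specRad (1 : Matrix (Fin d) (Fin d) ℝ) ≤ 1 := by
  rw [specRad, Matrix.map_one _ Complex.ofReal_zero Complex.ofReal_one]
  exact spectralRadius_one_le

theorem specRad_list_prod_ofFn_vecMulVec_le {d n : ℕ} (x : Fin n → Fin d → ℝ) (y : Fin d → ℝ) :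
    specRad (List.ofFn fun k => vecMulVec (x k) y).prod ≤
      ENNReal.ofReal (∏ k, |y ⬝ᵥ x k|) := by
  cases n with
  | zero => simpa using specRad_one_le
  | succ n =>
    rw [list_prod_ofFn_vecMulVec]
    refine (specRad_vecMulVec_le _ _).trans_eq ?_
    rw [dotProduct_smul, smul_eq_mul, abs_mul, Fin.prod_univ_succ, Finset.abs_prod, mul_comm,
      dotProduct_comm]

theorem stmt6_general {d : ℕ} (u v : Fin d → ℝ)
    (S₁ S₂ : Matrix (Fin d) (Fin d) ℝ) (hS₂ : S₂ = vecMulVec u v)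
    (γ : ℝ)
    (hbound : ∀ ℓ : ℕ, |v ⬝ᵥ (S₁ ^ ℓ).mulVec u| ≤ γ ^ (ℓ + 1)) :
    ∀ (n : ℕ) (ℓ : Fin n → ℕ),
      specRad ((List.ofFn fun k => S₁ ^ (ℓ k) * S₂).prod) ≤
        ENNReal.ofReal (γ ^ (n + ∑ k, ℓ k)) := by
  intro n ℓ
  simp only [hS₂, mul_vecMulVec]
  refine (specRad_list_prod_ofFn_vecMulVec_le _ v).trans (ENNReal.ofReal_le_ofReal ?_)
  calc ∏ k, |v ⬝ᵥ (S₁ ^ ℓ k) *ᵥ u|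
      ≤ ∏ k, γ ^ (ℓ k + 1) := Finset.prod_le_prod (fun _ _ => abs_nonneg _) fun k _ => hbound (ℓ k)
    _ = γ ^ (n + ∑ k, ℓ k) := by
      rw [Finset.prod_pow_eq_pow_sum, Finset.sum_add_distrib, Finset.sum_const, Finset.card_univ,
        Fintype.card_fin, smul_eq_mul, mul_one, add_comm]

theorem stmt6 {d : ℕ} (u v : Fin d → ℝ) (hu : u ≠ 0) (hv : v ≠ 0)
    (S₁ S₂ : Matrix (Fin d) (Fin d) ℝ) (hS₂ : S₂ = vecMulVec u v)
    (γ : ℝ) (hγ0 : 0 < γ) (hγ1 : γ < 1)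
    (hbound : ∀ ℓ : ℕ, |v ⬝ᵥ (S₁ ^ ℓ).mulVec u| ≤ γ ^ (ℓ + 1)) :
    ∀ (n : ℕ) (ℓ : Fin n → ℕ),
      specRad ((List.ofFn fun k => S₁ ^ (ℓ k) * S₂).prod) ≤
        ENNReal.ofReal (γ ^ (n + ∑ k, ℓ k)) :=
  stmt6_general u v S₁ S₂ hS₂ γ hbound
end

section
/- Let S₁ be the 4×4 upper-triangular matrix with unit diagonal and ε on the superdiagonal, and let S₂ be the 4×4 matrix all of whose rows equal (1, -1, 0, 1). Then ρ(S₁^ℓ · S₂) = 1 + (ℓ(ℓ-1)(ℓ-2)/6)·ε³ for every integer ℓ ≥ 2 and every ε > 0, where ρ is the spectral radius. -/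
/-!
Since every row of `S₂` is `v = (1, -1, 0, 1)`, `S₂ = 𝟙 vᵀ` has rank one, hence so has
`S₁ ^ ℓ * S₂ = (S₁ ^ ℓ 𝟙) vᵀ`. A rank-one matrix `A = u vᵀ` satisfies `A * A = (v ⬝ᵥ u) • A`, so its
spectrum lies in `{0, v ⬝ᵥ u}`, and `v ⬝ᵥ u` is an eigenvalue with eigenvector `u`; thus
`ρ(u vᵀ) = |v ⬝ᵥ u|`. Finally `S₁ = 1 + εN` with `N` the nilpotent shift, so the entries of
`S₁ ^ ℓ 𝟙` are truncations of `∑ₖ (ℓ choose k) εᵏ`, and `v ⬝ᵥ S₁ ^ ℓ 𝟙 = 1 + (ℓ choose 3) ε³`.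
-/

open Matrix

open Polynomial in
theorem spectrum_subset_of_mul_self_eq_smul {𝕜 A : Type*} [Field 𝕜] [Ring A] [Algebra 𝕜 A]
    {a : A} {c : 𝕜} (h : a * a = c • a) : spectrum 𝕜 a ⊆ {0, c} := by
  nontriviality A
  refine Set.image_subset_iff.mp (spectrum.subset_polynomial_aeval a (X ^ 2 - C c * X)) |>.trans
    fun z hz => ?_
  have hz : (z - c) * z = 0 := by
    rw [sub_mul]
    simpa [sq, h, Algebra.smul_def] using hz
  rcases mul_eq_zero.mp hz with hc | h0
  · exact .inr (sub_eq_zero.mp hc)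
  · exact .inl h0

theorem spectralRadius_vecMulVec {𝕜 n : Type*} [NormedField 𝕜] [Fintype n] [DecidableEq n]
    (u v : n → 𝕜) : spectralRadius 𝕜 (vecMulVec u v) = ‖v ⬝ᵥ u‖₊ := by
  refine le_antisymm (iSup₂_le fun z hz => ?_) ?_
  · have hsq : vecMulVec u v * vecMulVec u v = (v ⬝ᵥ u) • vecMulVec u v := by
      rw [vecMulVec_mul_vecMulVec, vecMulVec_smul]
    rcases spectrum_subset_of_mul_self_eq_smul hsq hz with rfl | rfl <;> simp
  · rcases eq_or_ne u 0 with rfl | hu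
    · simp
    have hmem : v ⬝ᵥ u ∈ spectrum 𝕜 (vecMulVec u v) := by
      rw [spectrum.mem_iff, Matrix.isUnit_iff_isUnit_det, isUnit_iff_ne_zero, not_not,
        ← Matrix.exists_mulVec_eq_zero_iff]
      refine ⟨u, hu, ?_⟩
      rw [Algebra.algebraMap_eq_smul_one, sub_mulVec, smul_mulVec, one_mulVec, vecMulVec_mulVec]
      simp
    exact le_iSup₂ (f := fun z (_ : z ∈ spectrum 𝕜 (vecMulVec u v)) => (‖z‖₊ : ENNReal)) _ hmem

theorem specRad_vecMulVec {d : ℕ} (u v : Fin d → ℝ) :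
    specRad (vecMulVec u v) = ENNReal.ofReal |v ⬝ᵥ u| := by
  have hmap : (vecMulVec u v).map Complex.ofReal =
      vecMulVec (Complex.ofRealHom ∘ u) (Complex.ofRealHom ∘ v) := by
    ext i j
    simp [vecMulVec_apply]
  rw [specRad, hmap, spectralRadius_vecMulVec, ← Complex.ofRealHom.map_dotProduct v u,
    Complex.ofRealHom_eq_coe, Complex.nnnorm_real, ← enorm_eq_nnnorm, Real.enorm_eq_ofReal_abs]

theorem unipotent_mulVec (ε a b c d : ℝ) :
    (1 + ε • Matrix.of
      (fun i j : Fin 4 => if (j : ℕ) = (i : ℕ) + 1 then (1 : ℝ) else 0)) *ᵥ ![a, b, c, d] =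
    ![a + ε * b, b + ε * c, c + ε * d, d] := by
  ext i
  fin_cases i <;> simp [mulVec, dotProduct, Fin.sum_univ_four]

theorem unipotent_pow_mulVec_one (ε : ℝ) (ℓ : ℕ) :
    (1 + ε • Matrix.of
      (fun i j : Fin 4 => if (j : ℕ) = (i : ℕ) + 1 then (1 : ℝ) else 0)) ^ ℓ *ᵥ 1 =
    ![1 + ℓ * ε + (ℓ * (ℓ - 1) / 2) * ε ^ 2 + (ℓ * (ℓ - 1) * (ℓ - 2) / 6) * ε ^ 3,
      1 + ℓ * ε + (ℓ * (ℓ - 1) / 2) * ε ^ 2, 1 + ℓ * ε, 1] := by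
  induction ℓ with
  | zero => ext i; fin_cases i <;> simp
  | succ n ih =>
    rw [pow_succ', ← mulVec_mulVec, ih, unipotent_mulVec]
    simp only [vecCons_inj, Nat.cast_succ, and_true]
    refine ⟨by ring, by ring, by ring⟩

theorem stmt11 (ε : ℝ) (hε : 0 < ε) (S₁ S₂ : Matrix (Fin 4) (Fin 4) ℝ)
    (hS₁ : S₁ = 1 + ε • Matrix.of
      (fun i j : Fin 4 => if (j : ℕ) = (i : ℕ) + 1 then (1 : ℝ) else 0))
    (hS₂ : S₂ = Matrix.of fun _ j : Fin 4 => ![(1 : ℝ), -1, 0, 1] j) :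
    ∀ ℓ : ℕ, 2 ≤ ℓ →
      specRad (S₁ ^ ℓ * S₂) =
        ENNReal.ofReal
          (1 + ((ℓ : ℝ) * ((ℓ : ℝ) - 1) * ((ℓ : ℝ) - 2) / 6) * ε ^ 3) := by
  intro ℓ hℓ
  have hS₂' : S₂ = vecMulVec 1 ![1, -1, 0, 1] := by
    rw [hS₂, one_vecMulVec]
    rfl
  have hℓ' : (2 : ℝ) ≤ ℓ := by exact_mod_cast hℓ
  have hd : 0 ≤ ((ℓ : ℝ) * (ℓ - 1) * (ℓ - 2) / 6) * ε ^ 3 :=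
    mul_nonneg (div_nonneg (mul_nonneg (mul_nonneg (by linarith) (by linarith)) (by linarith))
      (by norm_num)) (pow_nonneg hε.le 3)
  have hdot : ![1, -1, 0, 1] ⬝ᵥ (S₁ ^ ℓ *ᵥ 1) =
      1 + ((ℓ : ℝ) * (ℓ - 1) * (ℓ - 2) / 6) * ε ^ 3 := by
    rw [hS₁, unipotent_pow_mulVec_one]
    simp only [cons_dotProduct_cons, dotProduct_of_isEmpty]
    ring
  rw [hS₂', mul_vecMulVec, specRad_vecMulVec, hdot, abs_of_nonneg (by linarith)]
end
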